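/- The SUM aggregator is measurable: the map Multiset.sum : Multiset ℝ → ℝ, sending a finite multiset of real numbers to the sum of its elements (with multiplicity, the empty multiset mapping to 0), is measurable with respect to the counting σ-algebra on Multiset ℝ (for the Borel σ-algebra on ℝ) and the Borel σ-algebra on ℝ. -/

import Mathlib

/-! A simple function `s` takes finitely many values `y`, so `D ↦ (D.map s).sum` is the finite
combination `∑ y, countIn D (s ⁻¹' {y}) • y` of counting maps, each measurable by the definition of
the counting σ-algebra. A strongly measurable `f` is a pointwise limit of simple functions, and
finite sums commute with pointwise limits, so `D ↦ (D.map f).sum` is a pointwise limit of measurable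
maps. The sum aggregator is the case `f = id` on `ℝ`. -/

/- `countIn D E` is the number of elements of the finite multiset `D` lying in the set `E`,
counted with multiplicity. -/
open Classical in
noncomputable def countIn {X : Type*} (D : Multiset X) (E : Set X) : ℕ :=
  (D.filter (· ∈ E)).card

/-- The counting σ-algebra on the space of finite multisets over a measurable space `X`:
generated by the counting events `C(E,n) = {D | countIn D E = n}` for `E` measurable, `n : ℕ`. -/
def countingMS (X : Type*) [MeasurableSpace X] : MeasurableSpace (Multiset X) :=
  MeasurableSpace.generateFrom
    {C : Set (Multiset X) |
      ∃ (E : Set X) (n : ℕ), MeasurableSet E ∧ C = {D : Multiset X | countIn D E = n}}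

open Filter Topology MeasureTheory TopologicalSpace

variable {X M : Type*} [AddCommMonoid M]

lemma countIn_preimage_singleton {Y : Type*} [DecidableEq Y] (D : Multiset X) (g : X → Y) (y : Y) :
    countIn D (g ⁻¹' {y}) = (D.map g).count y := by
  classical
  rw [Multiset.count_map, countIn]
  congr 1
  exact Multiset.filter_congr fun x _ => eq_comm

lemma Multiset.sum_map_eq_sum_countIn_smul (D : Multiset X) (g : X → M) {t : Finset M}
    (ht : ∀ x ∈ D, g x ∈ t) :
    (D.map g).sum = ∑ y ∈ t, countIn D (g ⁻¹' {y}) • y := by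
  classical
  have hsub : (D.map g).toFinset ⊆ t := by
    intro y hy
    obtain ⟨x, hx, rfl⟩ := Multiset.mem_map.mp (Multiset.mem_toFinset.mp hy)
    exact ht x hx
  simp only [countIn_preimage_singleton]
  exact Finset.sum_multiset_count_of_subset _ t hsub

variable [MeasurableSpace X] [MeasurableSpace M]

lemma measurable_countIn {E : Set X} (hE : MeasurableSet E) :
    @Measurable _ _ (countingMS X) _ (countIn · E) :=
  let := countingMS X
  measurable_to_countable' fun n => MeasurableSpace.measurableSet_generateFrom ⟨E, n, hE, rfl⟩

lemma MeasureTheory.SimpleFunc.measurable_multisetSum_map [MeasurableAdd₂ M] (s : SimpleFunc X M) :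
    @Measurable _ _ (countingMS X) _ fun D => (D.map s).sum := by
  let := countingMS X
  have hsum : (fun D : Multiset X => (D.map s).sum) =
      fun D => ∑ y ∈ s.range, countIn D (s ⁻¹' {y}) • y :=
    funext fun D => D.sum_map_eq_sum_countIn_smul s fun x _ => s.mem_range_self x
  rw [hsum]
  exact Finset.measurable_fun_sum _ fun y _ =>
    (measurable_from_nat (f := (· • y))).comp (measurable_countIn (s.measurableSet_fiber y))

lemma MeasureTheory.StronglyMeasurable.measurable_multisetSum_map [MeasurableAdd₂ M]
    [TopologicalSpace M] [ContinuousAdd M] [PseudoMetrizableSpace M] [BorelSpace M] {f : X → M}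
    (hf : StronglyMeasurable f) : @Measurable _ _ (countingMS X) _ fun D => (D.map f).sum := by
  let := countingMS X
  have hlim : ∀ D : Multiset X,
      Tendsto (fun n => (D.map (hf.approx n)).sum) atTop (𝓝 (D.map f).sum) := fun D => by
    simpa using tendsto_multiset_sum D fun x _ => hf.tendsto_approx x
  exact measurable_of_tendsto_metrizable (fun n => (hf.approx n).measurable_multisetSum_map)
    (tendsto_pi_nhds.mpr hlim)

theorem sumAggregator_measurable :
    @Measurable _ _ (countingMS ℝ) _ (Multiset.sum : Multiset ℝ → ℝ) := by
  simpa using StronglyMeasurable.measurable_multisetSum_map (stronglyMeasurable_id (α := ℝ))
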